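/- arXiv:1902.04751 — 7 statements merged into one kernel-verified Lean document; each statement's English description precedes it below -/
import Mathlib

section
/- If two finite-outcome POVMs A and B on a finite-dimensional Hilbert space satisfy w(A) + w(B) ≥ 1, where w(A) = Σ_i λ_min(A_i) is the noise content, then A and B are compatible, i.e., there exists a POVM G with outcome set Ω_A × Ω_B such that Σ_j G(i,j) = A_i and Σ_i G(i,j) = B_j. -/
open Matrix BigOperators
open scoped ComplexOrder

/-- Minimal eigenvalue of a (Hermitian) matrix; junk value 0 otherwise. -/
noncomputable def minEig {d : ℕ} (M : Matrix (Fin d) (Fin d) ℂ) : ℝ :=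
  if h : M.IsHermitian then ⨅ j, h.eigenvalues j else 0

/-- Noise content `w(A) = ∑ᵢ λ_min(Aᵢ)` of a POVM. -/
noncomputable def noiseContent {d k : ℕ} (A : Fin k → Matrix (Fin d) (Fin d) ℂ) : ℝ :=
  ∑ i, minEig (A i)

/-!
Write `Aᵢ = aᵢ • 1 + A'ᵢ` with `aᵢ = λ_min(Aᵢ)`; the `A'ᵢ` are positive semidefinite and sum to
`(1 - w(A)) • 1`, and likewise `Bⱼ = bⱼ • 1 + B'ⱼ`. When `w(A), w(B) > 0`,
`Gᵢⱼ = (aᵢ / w(A)) • B'ⱼ + (bⱼ / w(B)) • A'ᵢ + (aᵢ bⱼ (w(A) + w(B) - 1) / (w(A) w(B))) • 1`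
is a joint POVM: every term is positive semidefinite because `w(A) + w(B) ≥ 1`, and summing over
`j` the first and last terms recombine into `aᵢ • 1`. Otherwise one of the noise contents is `0`,
so the other is `1` (noise contents never exceed `1`), which forces that POVM to be trivial
(`B'ⱼ = 0`), and `Gᵢⱼ = bⱼ • Aᵢ` works.
-/

open scoped MatrixOrder

section NoisyJoint

variable {ι κ M : Type*} [Fintype ι] [Fintype κ] [AddCommGroup M] [Module ℝ M]

noncomputable def noisyJoint (a : ι → ℝ) (b : κ → ℝ) (A' : ι → M) (B' : κ → M) (e : M)
    (i : ι) (j : κ) : M :=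
  (a i / ∑ i, a i) • B' j + (b j / ∑ j, b j) • A' i +
    (a i * b j * (∑ i, a i + ∑ j, b j - 1) / ((∑ i, a i) * ∑ j, b j)) • e

variable {a : ι → ℝ} {b : κ → ℝ} {A' : ι → M} {B' : κ → M} {e : M}

lemma noisyJoint_swap (i : ι) (j : κ) :
    noisyJoint b a B' A' e j i = noisyJoint a b A' B' e i j := by
  rw [noisyJoint, noisyJoint, add_comm ((b j / _) • A' i), add_comm (∑ j, b j), mul_comm (b j),
    mul_comm (∑ j, b j)]

lemma sum_noisyJoint_right (ha : ∑ i, a i ≠ 0) (hb : ∑ j, b j ≠ 0)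
    (hB' : ∑ j, B' j = (1 - ∑ j, b j) • e) (i : ι) :
    ∑ j, noisyJoint a b A' B' e i j = a i • e + A' i := by
  simp only [noisyJoint, Finset.sum_add_distrib, ← Finset.smul_sum, ← Finset.sum_smul, hB',
    smul_smul, ← Finset.sum_div, ← Finset.mul_sum, ← Finset.sum_mul, div_self hb, one_smul]
  rw [add_right_comm, ← add_smul]
  congr 2
  field_simp
  ring

lemma sum_noisyJoint_left (ha : ∑ i, a i ≠ 0) (hb : ∑ j, b j ≠ 0)
    (hA' : ∑ i, A' i = (1 - ∑ i, a i) • e) (j : κ) :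
    ∑ i, noisyJoint a b A' B' e i j = b j • e + B' j := by
  rw [← sum_noisyJoint_right hb ha hA' j]
  exact Finset.sum_congr rfl fun i _ => (noisyJoint_swap i j).symm

end NoisyJoint

lemma posSemidef_noisyJoint {ι κ n : Type*} [Fintype ι] [Fintype κ] [Fintype n]
    [DecidableEq n] {a : ι → ℝ} {b : κ → ℝ} {A' : ι → Matrix n n ℂ} {B' : κ → Matrix n n ℂ}
    (ha : ∀ i, 0 ≤ a i) (hb : ∀ j, 0 ≤ b j) (hA' : ∀ i, (A' i).PosSemidef)
    (hB' : ∀ j, (B' j).PosSemidef) (hw : 1 ≤ ∑ i, a i + ∑ j, b j) (i : ι) (j : κ) :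
    (noisyJoint a b A' B' 1 i j).PosSemidef := by
  have hsa : 0 ≤ ∑ i, a i := Finset.sum_nonneg fun i _ => ha i
  have hsb : 0 ≤ ∑ j, b j := Finset.sum_nonneg fun j _ => hb j
  refine (((hB' j).smul ?_).add ((hA' i).smul ?_)).add (PosSemidef.one.smul ?_)
  · exact div_nonneg (ha i) hsa
  · exact div_nonneg (hb j) hsb
  · exact div_nonneg (mul_nonneg (mul_nonneg (ha i) (hb j)) (by linarith)) (mul_nonneg hsa hsb)

section MinEig

variable {d : ℕ} {M : Matrix (Fin d) (Fin d) ℂ}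

lemma Matrix.IsHermitian.minEig_eq (h : M.IsHermitian) : minEig M = ⨅ j, h.eigenvalues j :=
  dif_pos h

lemma Matrix.PosSemidef.minEig_nonneg (hM : M.PosSemidef) : 0 ≤ minEig M := by
  rw [hM.isHermitian.minEig_eq]
  exact Real.iInf_nonneg hM.eigenvalues_nonneg

lemma Matrix.IsHermitian.minEig_smul_one_le (h : M.IsHermitian) :
    minEig M • (1 : Matrix (Fin d) (Fin d) ℂ) ≤ M := by
  rw [← Algebra.algebraMap_eq_smul_one]
  refine algebraMap_le_of_le_spectrum (fun x hx => ?_) h.isSelfAdjoint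
  obtain ⟨j, rfl⟩ := h.spectrum_real_eq_range_eigenvalues ▸ hx
  rw [h.minEig_eq]
  exact ciInf_le (Set.finite_range _).bddBelow j

end MinEig

section NoiseContent

variable {d k : ℕ} {A : Fin k → Matrix (Fin d) (Fin d) ℂ}

lemma sum_sub_minEig_smul_one (hAsum : ∑ i, A i = 1) :
    ∑ i, (A i - minEig (A i) • 1) = (1 - noiseContent A) • (1 : Matrix (Fin d) (Fin d) ℂ) := by
  rw [Finset.sum_sub_distrib, hAsum, ← Finset.sum_smul, noiseContent, sub_smul, one_smul]

lemma noiseContent_le_one (hd : 0 < d) (hA : ∀ i, (A i).IsHermitian) (hAsum : ∑ i, A i = 1) :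
    noiseContent A ≤ 1 := by
  have h : 0 ≤ (1 - noiseContent A) • (1 : Matrix (Fin d) (Fin d) ℂ) :=
    sum_sub_minEig_smul_one hAsum ▸
      Finset.sum_nonneg fun i _ => sub_nonneg.mpr (hA i).minEig_smul_one_le
  have h00 : (0 : ℂ) ≤ (1 - noiseContent A : ℝ) := by
    simpa using h.posSemidef.diag_nonneg (i := ⟨0, hd⟩)
  exact sub_nonneg.mp (Complex.zero_le_real.mp h00)

lemma eq_minEig_smul_one_of_noiseContent_eq_one (hA : ∀ i, (A i).IsHermitian)
    (hAsum : ∑ i, A i = 1) (hw : noiseContent A = 1) (i : Fin k) :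
    A i = minEig (A i) • 1 := by
  have hsum := sum_sub_minEig_smul_one hAsum
  rw [hw, sub_self, zero_smul] at hsum
  refine sub_eq_zero.mp ((Finset.sum_eq_zero_iff_of_nonneg fun i _ => ?_).mp hsum i
    (Finset.mem_univ i))
  exact sub_nonneg.mpr (hA i).minEig_smul_one_le

end NoiseContent

def Compatible {d k l : ℕ} (A : Fin k → Matrix (Fin d) (Fin d) ℂ)
    (B : Fin l → Matrix (Fin d) (Fin d) ℂ) : Prop :=
  ∃ G : Fin k → Fin l → Matrix (Fin d) (Fin d) ℂ,
    (∀ i j, (G i j).PosSemidef) ∧ (∀ i, ∑ j, G i j = A i) ∧ (∀ j, ∑ i, G i j = B j)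

section Compatible

variable {d k l : ℕ} {A : Fin k → Matrix (Fin d) (Fin d) ℂ} {B : Fin l → Matrix (Fin d) (Fin d) ℂ}

lemma Compatible.symm (h : Compatible A B) : Compatible B A := by
  obtain ⟨G, hG, hGA, hGB⟩ := h
  exact ⟨fun j i => G i j, fun j i => hG i j, hGB, hGA⟩

lemma compatible_of_noiseContent_eq_one (hA : ∀ i, (A i).PosSemidef) (hAsum : ∑ i, A i = 1)
    (hB : ∀ j, (B j).PosSemidef) (hBsum : ∑ j, B j = 1) (hwB : noiseContent B = 1) :
    Compatible A B := by
  refine ⟨fun i j => minEig (B j) • A i, fun i j => (hA i).smul (hB j).minEig_nonneg,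
    fun i => ?_, fun j => ?_⟩
  · rw [← Finset.sum_smul, ← noiseContent, hwB, one_smul]
  · rw [← Finset.smul_sum, hAsum,
      ← eq_minEig_smul_one_of_noiseContent_eq_one (fun j => (hB j).isHermitian) hBsum hwB]

lemma compatible_of_noiseContent_pos (hA : ∀ i, (A i).PosSemidef) (hAsum : ∑ i, A i = 1)
    (hB : ∀ j, (B j).PosSemidef) (hBsum : ∑ j, B j = 1) (hwA : 0 < noiseContent A)
    (hwB : 0 < noiseContent B) (hw : 1 ≤ noiseContent A + noiseContent B) :
    Compatible A B := by
  refine ⟨noisyJoint (fun i => minEig (A i)) (fun j => minEig (B j))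
    (fun i => A i - minEig (A i) • 1) (fun j => B j - minEig (B j) • 1) 1, ?_, fun i => ?_,
    fun j => ?_⟩
  · exact posSemidef_noisyJoint (fun i => (hA i).minEig_nonneg) (fun j => (hB j).minEig_nonneg)
      (fun i => (sub_nonneg.mpr (hA i).isHermitian.minEig_smul_one_le).posSemidef)
      (fun j => (sub_nonneg.mpr (hB j).isHermitian.minEig_smul_one_le).posSemidef) hw
  · rw [sum_noisyJoint_right hwA.ne' hwB.ne' (sum_sub_minEig_smul_one hBsum), add_sub_cancel]
  · rw [sum_noisyJoint_left hwA.ne' hwB.ne' (sum_sub_minEig_smul_one hAsum), add_sub_cancel]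

end Compatible

/-- Noise content criterion: if `w(A) + w(B) ≥ 1` then the POVMs `A` and `B`
are compatible, i.e. they admit a joint POVM. -/
theorem noise_content_criterion {d k l : ℕ} (hd : 0 < d)
    (A : Fin k → Matrix (Fin d) (Fin d) ℂ) (B : Fin l → Matrix (Fin d) (Fin d) ℂ)
    (hA : ∀ i, (A i).PosSemidef) (hAsum : ∑ i, A i = 1)
    (hB : ∀ j, (B j).PosSemidef) (hBsum : ∑ j, B j = 1)
    (hw : noiseContent A + noiseContent B ≥ 1) :
    ∃ G : Fin k → Fin l → Matrix (Fin d) (Fin d) ℂ,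
      (∀ i j, (G i j).PosSemidef) ∧
      (∀ i, ∑ j, G i j = A i) ∧
      (∀ j, ∑ i, G i j = B j) := by
  have hwA := noiseContent_le_one hd (fun i => (hA i).isHermitian) hAsum
  have hwB := noiseContent_le_one hd (fun j => (hB j).isHermitian) hBsum
  rcases hwB.eq_or_lt with hB1 | hB1
  · exact compatible_of_noiseContent_eq_one hA hAsum hB hBsum hB1
  rcases hwA.eq_or_lt with hA1 | hA1
  · exact (compatible_of_noiseContent_eq_one hB hBsum hA hAsum hA1).symm
  exact compatible_of_noiseContent_pos hA hAsum hB hBsum (by linarith) (by linarith) hw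
end

section
/- If two finite-outcome POVMs A and B on ℂ^d satisfy A_i B_j + B_j A_i ≥ 0 for all outcomes i, j, then A and B are compatible, with joint POVM G(i,j) = (A_i B_j + B_j A_i)/2. -/
open Matrix BigOperators
open scoped ComplexOrder

section JordanSum

variable {ι R : Type*} [Fintype ι] [Ring R]

theorem sum_jordan_right (X : R) (Y : ι → R) :
    ∑ j, (X * Y j + Y j * X) = X * ∑ j, Y j + (∑ j, Y j) * X := by
  rw [Finset.sum_add_distrib, Finset.mul_sum, Finset.sum_mul]

theorem sum_half_jordan_right_of_sum_eq_one {𝕜 : Type*} [DivisionRing 𝕜] [CharZero 𝕜]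
    [Module 𝕜 R] (X : R) {Y : ι → R} (hY : ∑ j, Y j = 1) :
    ∑ j, ((1 : 𝕜) / 2) • (X * Y j + Y j * X) = X := by
  rw [← Finset.smul_sum, sum_jordan_right, hY, mul_one, one_mul, ← two_smul 𝕜, smul_smul]
  norm_num

end JordanSum

theorem jordan_product_criterion_general {d k l : ℕ}
    (A : Fin k → Matrix (Fin d) (Fin d) ℂ) (B : Fin l → Matrix (Fin d) (Fin d) ℂ)
    (hAsum : ∑ i, A i = 1)
    (hBsum : ∑ j, B j = 1)
    (hJordan : ∀ i j, (A i * B j + B j * A i).PosSemidef) :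
    (∀ i j, (((1 : ℂ)/2) • (A i * B j + B j * A i)).PosSemidef) ∧
    (∀ i, ∑ j, ((1 : ℂ)/2) • (A i * B j + B j * A i) = A i) ∧
    (∀ j, ∑ i, ((1 : ℂ)/2) • (A i * B j + B j * A i) = B j) := by
  refine ⟨fun i j => (hJordan i j).smul (by positivity), fun i => ?_, fun j => ?_⟩
  · exact sum_half_jordan_right_of_sum_eq_one (A i) hBsum
  · simp_rw [add_comm (A _ * B j)]
    exact sum_half_jordan_right_of_sum_eq_one (B j) hAsum

/-- Jordan product criterion: if `AᵢBⱼ + BⱼAᵢ ≥ 0` for all outcomes, then the POVMs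
`A` and `B` are compatible, with joint POVM `G(i,j) = (AᵢBⱼ + BⱼAᵢ)/2`. -/
theorem jordan_product_criterion {d k l : ℕ}
    (A : Fin k → Matrix (Fin d) (Fin d) ℂ) (B : Fin l → Matrix (Fin d) (Fin d) ℂ)
    (hA : ∀ i, (A i).PosSemidef) (hAsum : ∑ i, A i = 1)
    (hB : ∀ j, (B j).PosSemidef) (hBsum : ∑ j, B j = 1)
    (hJordan : ∀ i j, (A i * B j + B j * A i).PosSemidef) :
    (∀ i j, (((1 : ℂ)/2) • (A i * B j + B j * A i)).PosSemidef) ∧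
    (∀ i, ∑ j, ((1 : ℂ)/2) • (A i * B j + B j * A i) = A i) ∧
    (∀ j, ∑ i, ((1 : ℂ)/2) • (A i * B j + B j * A i) = B j) :=
  jordan_product_criterion_general A B hAsum hBsum hJordan
end

section
/- A k-outcome POVM A on ℂ^d has full probability range, i.e., ProbRan(A) = Δ_k, if and only if every effect has unit operator norm: ‖A_i‖ = 1 for all i = 1,...,k. -/
/-!
The probability range is always a convex subset of the simplex, so it is the whole simplex iff it
contains every vertex `eᵢ`. As the outcome probabilities are nonnegative and sum to one, `eᵢ` is
attained iff some density matrix `ρ` has `Tr(ρ Aᵢ) = 1`, i.e. `Tr(ρ (1 - Aᵢ)) = 0`. For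
`ρ, 1 - Aᵢ ≥ 0` this forces `(1 - Aᵢ) ρ = 0`, so it happens iff `1` is an eigenvalue of `Aᵢ`
(conversely, take for `ρ` the projection onto an eigenvector). Finally, for `0 ≤ a ≤ 1` in a
C⋆-algebra, `‖a‖ ∈ σ(a) ⊆ [0, 1]`, so `‖a‖ = 1` iff `1 ∈ σ(a)`.
-/

open Matrix BigOperators
open scoped ComplexOrder

noncomputable def opNorm {d : ℕ} (M : Matrix (Fin d) (Fin d) ℂ) : ℝ :=
  ‖Matrix.toEuclideanCLM (𝕜 := ℂ) M‖

open Finset Set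
open scoped MatrixOrder

lemma CStarAlgebra.norm_eq_one_iff_one_mem_spectrum {A : Type*} [CStarAlgebra A]
    [PartialOrder A] [StarOrderedRing A] {a : A} (ha₀ : 0 ≤ a) (ha₁ : a ≤ 1) :
    ‖a‖ = 1 ↔ (1 : ℝ) ∈ spectrum ℝ a := by
  constructor
  · intro h
    have : Nontrivial A := nontrivial_of_ne a 0 (by rintro rfl; simp at h)
    simpa [h] using CStarAlgebra.norm_mem_spectrum_of_nonneg ha₀
  · intro h
    have : Nontrivial A := not_subsingleton_iff_nontrivial.mp fun _ ↦ h (isUnit_of_subsingleton _)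
    refine le_antisymm ((CStarAlgebra.norm_le_one_iff_of_nonneg a ha₀).2 ha₁) ?_
    simpa using spectrum.norm_le_norm_of_mem h

namespace Matrix

lemma trace_conjTranspose_mul_self_mul_conjTranspose_mul_self {l m n R : Type*} [Fintype l]
    [Fintype m] [Fintype n] [CommRing R] [StarRing R] (B : Matrix m n R) (C : Matrix l n R) :
    (Bᴴ * B * (Cᴴ * C)).trace = ((C * Bᴴ)ᴴ * (C * Bᴴ)).trace := by
  rw [conjTranspose_mul, conjTranspose_conjTranspose, Matrix.mul_assoc, trace_mul_comm,
    Matrix.mul_assoc, Matrix.mul_assoc, Matrix.mul_assoc]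

variable {n : Type*} [Fintype n] [DecidableEq n]

lemma PosSemidef.trace_mul_nonneg {ρ N : Matrix n n ℂ} (hρ : ρ.PosSemidef) (hN : N.PosSemidef) :
    0 ≤ (ρ * N).trace := by
  obtain ⟨B, rfl⟩ := CStarAlgebra.nonneg_iff_eq_star_mul_self.mp hρ.nonneg
  obtain ⟨C, rfl⟩ := CStarAlgebra.nonneg_iff_eq_star_mul_self.mp hN.nonneg
  rw [star_eq_conjTranspose, star_eq_conjTranspose,
    trace_conjTranspose_mul_self_mul_conjTranspose_mul_self]
  exact (posSemidef_conjTranspose_mul_self _).trace_nonneg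

lemma PosSemidef.mul_eq_zero_of_trace_mul_eq_zero {ρ N : Matrix n n ℂ} (hρ : ρ.PosSemidef)
    (hN : N.PosSemidef) (h : (ρ * N).trace = 0) : N * ρ = 0 := by
  obtain ⟨B, rfl⟩ := CStarAlgebra.nonneg_iff_eq_star_mul_self.mp hρ.nonneg
  obtain ⟨C, rfl⟩ := CStarAlgebra.nonneg_iff_eq_star_mul_self.mp hN.nonneg
  rw [star_eq_conjTranspose, star_eq_conjTranspose,
    trace_conjTranspose_mul_self_mul_conjTranspose_mul_self,
    trace_conjTranspose_mul_self_eq_zero_iff] at h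
  rw [star_eq_conjTranspose, star_eq_conjTranspose, Matrix.mul_assoc, ← Matrix.mul_assoc C, h,
    Matrix.zero_mul, Matrix.mul_zero]

lemma exists_density_trace_mul_eq_one_iff {A : Matrix n n ℂ} (hA : A ≤ 1) :
    (∃ ρ : Matrix n n ℂ, ρ.PosSemidef ∧ ρ.trace = 1 ∧ (ρ * A).trace = 1) ↔
      (1 : ℝ) ∈ spectrum ℝ A := by
  rw [spectrum.mem_iff, map_one]
  constructor
  · rintro ⟨ρ, hρ, htr, hρA⟩ hunit
    have h : (ρ * (1 - A)).trace = 0 := by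
      rw [Matrix.mul_sub, Matrix.mul_one, trace_sub, htr, hρA, sub_self]
    have hρ0 : ρ = 0 := hunit.mul_right_eq_zero.mp (hρ.mul_eq_zero_of_trace_mul_eq_zero hA h)
    simp [hρ0] at htr
  · intro hunit
    rw [isUnit_iff_isUnit_det, isUnit_iff_ne_zero, not_not, ← exists_mulVec_eq_zero_iff] at hunit
    obtain ⟨v, hv0, hv⟩ := hunit
    rw [sub_mulVec, one_mulVec, sub_eq_zero, eq_comm] at hv
    have hc : v ⬝ᵥ star v ≠ 0 := dotProduct_self_star_eq_zero.not.mpr hv0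
    refine ⟨(v ⬝ᵥ star v)⁻¹ • vecMulVec v (star v),
      (posSemidef_vecMulVec_self_star v).smul (inv_nonneg.mpr (dotProduct_self_star_nonneg v)),
      ?_, ?_⟩
    · rw [trace_smul, trace_vecMulVec, smul_eq_mul, inv_mul_cancel₀ hc]
    · rw [smul_mul, trace_smul, trace_mul_comm, mul_vecMulVec, hv, trace_vecMulVec, smul_eq_mul,
        inv_mul_cancel₀ hc]

end Matrix

section ProbRange

variable {ι n : Type*} [Fintype n]

def probRange (A : ι → Matrix n n ℂ) : Set (ι → ℝ) :=
  {p | ∃ ρ : Matrix n n ℂ, ρ.PosSemidef ∧ ρ.trace = 1 ∧ ∀ i, (ρ * A i).trace = (p i : ℂ)}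

lemma convex_probRange (A : ι → Matrix n n ℂ) : Convex ℝ (probRange A) := by
  rintro p ⟨ρ, hρ, hρtr, hp⟩ q ⟨σ, hσ, hσtr, hq⟩ a b ha hb hab
  refine ⟨(a : ℂ) • ρ + (b : ℂ) • σ,
    (hρ.smul (Complex.zero_le_real.2 ha)).add (hσ.smul (Complex.zero_le_real.2 hb)), ?_, ?_⟩
  · rw [trace_add, trace_smul, trace_smul, hρtr, hσtr, smul_eq_mul, smul_eq_mul, mul_one,
      mul_one]
    exact_mod_cast hab
  · intro i
    rw [Matrix.add_mul, smul_mul, smul_mul, trace_add, trace_smul, trace_smul, hp i, hq i]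
    simp

variable [Fintype ι] [DecidableEq n] {A : ι → Matrix n n ℂ}

lemma sum_trace_mul_eq_trace (hsum : ∑ i, A i = 1) (ρ : Matrix n n ℂ) :
    ∑ i, (ρ * A i).trace = ρ.trace := by
  rw [← trace_sum, ← Finset.mul_sum, hsum, Matrix.mul_one]

lemma probRange_subset_stdSimplex (hA : ∀ i, (A i).PosSemidef) (hsum : ∑ i, A i = 1) :
    probRange A ⊆ stdSimplex ℝ ι := by
  rintro p ⟨ρ, hρ, htr, hp⟩
  refine ⟨fun i => Complex.zero_le_real.1 (hp i ▸ hρ.trace_mul_nonneg (hA i)), ?_⟩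
  have h := sum_trace_mul_eq_trace hsum ρ
  simp only [hp, htr] at h
  exact_mod_cast h

variable [DecidableEq ι]

lemma single_mem_probRange_iff (hA : ∀ i, (A i).PosSemidef) (hsum : ∑ i, A i = 1) (i : ι) :
    Pi.single i 1 ∈ probRange A ↔
      ∃ ρ : Matrix n n ℂ, ρ.PosSemidef ∧ ρ.trace = 1 ∧ (ρ * A i).trace = 1 := by
  constructor
  · rintro ⟨ρ, hρ, htr, hp⟩
    exact ⟨ρ, hρ, htr, by simpa using hp i⟩
  · rintro ⟨ρ, hρ, htr, hi⟩
    refine ⟨ρ, hρ, htr, fun j => ?_⟩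
    have hrest : ∑ j ∈ univ.erase i, (ρ * A j).trace = 0 := by
      have h := add_sum_erase univ (fun j => (ρ * A j).trace) (mem_univ i)
      rw [sum_trace_mul_eq_trace hsum, htr, hi, add_eq_left] at h
      exact h
    rcases eq_or_ne j i with rfl | hji
    · simpa using hi
    · rw [Pi.single_eq_of_ne hji, Complex.ofReal_zero]
      exact (sum_eq_zero_iff_of_nonneg fun j _ => hρ.trace_mul_nonneg (hA j)).mp hrest j
        (mem_erase.2 ⟨hji, mem_univ j⟩)

lemma probRange_eq_stdSimplex_iff (hA : ∀ i, (A i).PosSemidef) (hsum : ∑ i, A i = 1) :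
    probRange A = stdSimplex ℝ ι ↔ ∀ i, Pi.single i 1 ∈ probRange A := by
  refine ⟨fun h i => h ▸ single_mem_stdSimplex ℝ i, fun h => ?_⟩
  refine (probRange_subset_stdSimplex hA hsum).antisymm ?_
  rw [← convexHull_rangle_single_eq_stdSimplex]
  exact convexHull_min (range_subset_iff.2 h) (convex_probRange A)

end ProbRange

section
open scoped Matrix.Norms.L2Operator

lemma opNorm_eq_one_iff_one_mem_spectrum {d : ℕ} {M : Matrix (Fin d) (Fin d) ℂ} (h₀ : 0 ≤ M)
    (h₁ : M ≤ 1) : opNorm M = 1 ↔ (1 : ℝ) ∈ spectrum ℝ M :=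
  CStarAlgebra.norm_eq_one_iff_one_mem_spectrum h₀ h₁

end

theorem full_probRange_iff_norm_one_general {d k : ℕ}
    (A : Fin k → Matrix (Fin d) (Fin d) ℂ)
    (hA : ∀ i, (A i).PosSemidef) (hAsum : ∑ i, A i = 1) :
    {p : Fin k → ℝ | ∃ ρ : Matrix (Fin d) (Fin d) ℂ, ρ.PosSemidef ∧ ρ.trace = 1 ∧
        ∀ i, (ρ * A i).trace = (p i : ℂ)} = stdSimplex ℝ (Fin k)
      ↔ ∀ i, opNorm (A i) = 1 := by
  have hle : ∀ i, A i ≤ 1 := fun i =>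
    hAsum ▸ single_le_sum (fun j _ => (hA j).nonneg) (mem_univ i)
  change probRange A = _ ↔ _
  rw [probRange_eq_stdSimplex_iff hA hAsum]
  refine forall_congr' fun i => ?_
  rw [single_mem_probRange_iff hA hAsum, exists_density_trace_mul_eq_one_iff (hle i),
    opNorm_eq_one_iff_one_mem_spectrum (hA i).nonneg (hle i)]

/-- A POVM has full probability range `Δ_k` iff all its effects have unit operator norm. -/
theorem full_probRange_iff_norm_one {d k : ℕ} (hd : 0 < d)
    (A : Fin k → Matrix (Fin d) (Fin d) ℂ)
    (hA : ∀ i, (A i).PosSemidef) (hAsum : ∑ i, A i = 1) :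
    {p : Fin k → ℝ | ∃ ρ : Matrix (Fin d) (Fin d) ℂ, ρ.PosSemidef ∧ ρ.trace = 1 ∧
        ∀ i, (ρ * A i).trace = (p i : ℂ)} = stdSimplex ℝ (Fin k)
      ↔ ∀ i, opNorm (A i) = 1 :=
  full_probRange_iff_norm_one_general A hA hAsum
end

section
/- Let X, Y be positive definite d×d complex matrices and let R(X) = λ_max(X)/λ_min(X). If (√R(X) − 1)(√R(Y) − 1) < 2, then the Jordan product XY + YX is positive definite. -/
open Matrix BigOperators
open scoped ComplexOrder

/-- Maximal eigenvalue of a (Hermitian) matrix; junk value 0 otherwise. -/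
noncomputable def maxEig {d : ℕ} (M : Matrix (Fin d) (Fin d) ℂ) : ℝ :=
  if h : M.IsHermitian then ⨆ j, h.eigenvalues j else 0

/-- Condition number `R(X) = λ_max(X)/λ_min(X)` of a positive definite matrix. -/
noncomputable def condNum {d : ℕ} (M : Matrix (Fin d) (Fin d) ℂ) : ℝ :=
  maxEig M / minEig M

/-!
For `v ≠ 0` we have `⟪v, (XY + YX) v⟫ = 2 Re ⟪Xv, Yv⟫`. If the spectrum of `X` lies in `[m, M]`,
then `(X - m)(M - X)` is positive semidefinite, and completing a square turns this into the
Kantorovich-type bound `‖v‖² ‖Xv‖² ≤ κ ⟪v, Xv⟫²` with `κ = (R + 1)² / (4R)`, `R = M / m`: the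
component of `Xv` orthogonal to `v` is small compared to its component along `v`. Splitting `Xv`
and `Yv` along `v` and applying Cauchy–Schwarz to the orthogonal parts gives `Re ⟪Xv, Yv⟫ > 0` as
soon as `(κ_X - 1)(κ_Y - 1) < 1`. Since `κ - 1 = ((R - 1) / (2√R))²`, this follows from
`(√R_X - 1)(√R_Y - 1) < 2`.
-/

open RCLike WithLp

section InnerProductSpace

variable {𝕜 E : Type*} [RCLike 𝕜] [NormedAddCommGroup E] [InnerProductSpace 𝕜 E]

local notation "⟪" x ", " y "⟫" => inner 𝕜 x y

theorem re_inner_sub_smul_smul_sub (v a : E) (m M : ℝ) :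
    re ⟪a - (m : 𝕜) • v, (M : 𝕜) • v - a⟫ = (m + M) * re ⟪v, a⟫ - ‖a‖ ^ 2 - m * M * ‖v‖ ^ 2 := by
  simp only [inner_sub_left, inner_sub_right, inner_smul_left, inner_smul_right, conj_ofReal,
    map_sub, re_ofReal_mul, inner_self_eq_norm_sq, inner_re_symm a v]
  ring

theorem kantorovich_of_re_inner_nonneg {v a : E} {m M : ℝ} (hmM : 0 ≤ m * M)
    (h : 0 ≤ re ⟪a - (m : 𝕜) • v, (M : 𝕜) • v - a⟫) :
    4 * m * M * (‖v‖ ^ 2 * ‖a‖ ^ 2) ≤ (m + M) ^ 2 * re ⟪v, a⟫ ^ 2 := by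
  rw [re_inner_sub_smul_smul_sub] at h
  have := mul_le_mul_of_nonneg_left h (by positivity : 0 ≤ 4 * (m * M) * ‖v‖ ^ 2)
  nlinarith [sq_nonneg ((m + M) * re ⟪v, a⟫ - 2 * m * M * ‖v‖ ^ 2)]

theorem re_inner_smul_sub_smul (v a b : E) :
    re ⟪((‖v‖ ^ 2 : ℝ) : 𝕜) • a - (re ⟪v, a⟫ : 𝕜) • v,
        ((‖v‖ ^ 2 : ℝ) : 𝕜) • b - (re ⟪v, b⟫ : 𝕜) • v⟫ =
      ‖v‖ ^ 2 * (‖v‖ ^ 2 * re ⟪a, b⟫ - re ⟪v, a⟫ * re ⟪v, b⟫) := by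
  have hv : re ⟪v, v⟫ = ‖v‖ ^ 2 := inner_self_eq_norm_sq v
  simp only [inner_sub_left, inner_sub_right, inner_smul_left, inner_smul_right, map_sub,
    conj_ofReal, re_ofReal_mul, inner_re_symm a v, hv]
  ring

theorem re_inner_pos_of_norm_sq_mul_norm_sq_le {v a b : E} {κ μ : ℝ}
    (ha : 0 < re ⟪v, a⟫) (hb : 0 < re ⟪v, b⟫)
    (hκ : ‖v‖ ^ 2 * ‖a‖ ^ 2 ≤ κ * re ⟪v, a⟫ ^ 2) (hμ : ‖v‖ ^ 2 * ‖b‖ ^ 2 ≤ μ * re ⟪v, b⟫ ^ 2)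
    (hκμ : (κ - 1) * (μ - 1) < 1) : 0 < re ⟪a, b⟫ := by
  have hpp := re_inner_smul_sub_smul (𝕜 := 𝕜) v a a
  have hqq := re_inner_smul_sub_smul (𝕜 := 𝕜) v b b
  have hpq := re_inner_smul_sub_smul (𝕜 := 𝕜) v a b
  set n := ‖v‖ ^ 2
  set α := re ⟪v, a⟫
  set β := re ⟪v, b⟫
  -- `p` and `q` are `‖v‖²` times the components of `a` and `b` orthogonal to `v`
  set p := (n : 𝕜) • a - (α : 𝕜) • v
  set q := (n : 𝕜) • b - (β : 𝕜) • v
  have hn : 0 < n := by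
    have : v ≠ 0 := by rintro rfl; simp [α] at ha
    positivity
  simp only [inner_self_eq_norm_sq] at hpp hqq
  have hp : ‖p‖ ^ 2 ≤ n * ((κ - 1) * α ^ 2) :=
    hpp ▸ mul_le_mul_of_nonneg_left (by linarith) hn.le
  have hq : ‖q‖ ^ 2 ≤ n * ((μ - 1) * β ^ 2) :=
    hqq ▸ mul_le_mul_of_nonneg_left (by linarith) hn.le
  have hpq_lt : ‖p‖ * ‖q‖ < n * α * β := by
    refine lt_of_pow_lt_pow_left₀ 2 (by positivity) ?_
    calc (‖p‖ * ‖q‖) ^ 2 = ‖p‖ ^ 2 * ‖q‖ ^ 2 := mul_pow _ _ _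
      _ ≤ n * ((κ - 1) * α ^ 2) * (n * ((μ - 1) * β ^ 2)) :=
        mul_le_mul hp hq (by positivity) ((sq_nonneg _).trans hp)
      _ = (κ - 1) * (μ - 1) * (n * α * β) ^ 2 := by ring
      _ < (n * α * β) ^ 2 := mul_lt_of_lt_one_left (by positivity) hκμ
  have hcs : -(‖p‖ * ‖q‖) ≤ re ⟪p, q⟫ := by
    have := re_inner_le_norm (𝕜 := 𝕜) p (-q)
    rw [inner_neg_right, map_neg, norm_neg] at this
    linarith
  rw [hpq] at hcs
  have : 0 < n * (n * re ⟪a, b⟫) := by linarith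
  exact pos_of_mul_pos_right (pos_of_mul_pos_right this hn.le) hn.le

end InnerProductSpace

theorem kantorovich_sub_one_mul_lt_one {R S : ℝ} (hR : 1 ≤ R) (hS : 1 ≤ S)
    (h : (√R - 1) * (√S - 1) < 2) :
    ((R + 1) ^ 2 / (4 * R) - 1) * ((S + 1) ^ 2 / (4 * S) - 1) < 1 := by
  obtain ⟨x, hx, rfl⟩ : ∃ x, 1 ≤ x ∧ R = x ^ 2 :=
    ⟨√R, Real.one_le_sqrt.2 hR, (Real.sq_sqrt (by linarith)).symm⟩
  obtain ⟨y, hy, rfl⟩ : ∃ y, 1 ≤ y ∧ S = y ^ 2 :=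
    ⟨√S, Real.one_le_sqrt.2 hS, (Real.sq_sqrt (by linarith)).symm⟩
  rw [Real.sqrt_sq (by linarith), Real.sqrt_sq (by linarith)] at h
  have key : (x ^ 2 - 1) * (y ^ 2 - 1) < 4 * x * y := by
    nlinarith [mul_nonneg (sub_nonneg.2 hx) (sub_nonneg.2 hy)]
  have hnn : 0 ≤ (x ^ 2 - 1) * (y ^ 2 - 1) := by
    apply mul_nonneg <;> nlinarith
  rw [show ((x ^ 2 + 1) ^ 2 / (4 * x ^ 2) - 1) * ((y ^ 2 + 1) ^ 2 / (4 * y ^ 2) - 1) =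
    ((x ^ 2 - 1) * (y ^ 2 - 1) / (4 * x * y)) ^ 2 by field_simp; ring,
    sq_lt_one_iff₀ (by positivity), div_lt_one (by positivity)]
  exact key

namespace Matrix.IsHermitian

variable {n : Type*} [Fintype n]

theorem mul_add_mul {𝕜 : Type*} [RCLike 𝕜] {A B : Matrix n n 𝕜} (hA : A.IsHermitian)
    (hB : B.IsHermitian) : (A * B + B * A).IsHermitian := by
  rw [IsHermitian, conjTranspose_add, conjTranspose_mul, conjTranspose_mul, hA.eq, hB.eq, add_comm]

theorem star_dotProduct_mul_mulVec {𝕜 : Type*} [RCLike 𝕜] {A : Matrix n n 𝕜}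
    (hA : A.IsHermitian) (B : Matrix n n 𝕜) (v : n → 𝕜) :
    star v ⬝ᵥ ((A * B) *ᵥ v) = inner 𝕜 (toLp 2 (A *ᵥ v)) (toLp 2 (B *ᵥ v)) := by
  rw [EuclideanSpace.inner_toLp_toLp, dotProduct_comm (B *ᵥ v), star_mulVec, hA.eq,
    ← dotProduct_mulVec, mulVec_mulVec]

theorem star_dotProduct_jordan_mulVec {𝕜 : Type*} [RCLike 𝕜] {A B : Matrix n n 𝕜}
    (hA : A.IsHermitian) (hB : B.IsHermitian) (v : n → 𝕜) :
    star v ⬝ᵥ ((A * B + B * A) *ᵥ v) =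
      ((2 * re (inner 𝕜 (toLp 2 (A *ᵥ v)) (toLp 2 (B *ᵥ v))) : ℝ) : 𝕜) := by
  rw [add_mulVec, dotProduct_add, hA.star_dotProduct_mul_mulVec, hB.star_dotProduct_mul_mulVec,
    ← inner_conj_symm (toLp 2 (B *ᵥ v)), add_conj, ofReal_mul, ofReal_ofNat]

variable [DecidableEq n] {X : Matrix n n ℂ} (hX : X.IsHermitian) {m M : ℝ}

open scoped MatrixOrder Matrix.Norms.L2Operator in
theorem posSemidef_sub_mul_sub (hm : ∀ i, m ≤ hX.eigenvalues i)
    (hM : ∀ i, hX.eigenvalues i ≤ M) :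
    ((X - algebraMap ℝ _ m) * (algebraMap ℝ _ M - X)).PosSemidef := by
  rw [← nonneg_iff_posSemidef]
  refine Commute.mul_nonneg (sub_nonneg.2 (algebraMap_le_of_le_spectrum ?_))
    (sub_nonneg.2 (le_algebraMap_of_spectrum_le ?_)) ?_
  · rw [hX.spectrum_real_eq_range_eigenvalues]
    rintro _ ⟨i, rfl⟩
    exact hm i
  · rw [hX.spectrum_real_eq_range_eigenvalues]
    rintro _ ⟨i, rfl⟩
    exact hM i
  · exact ((Algebra.commute_algebraMap_right M X).sub_right (Commute.refl X)).sub_left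
      (Algebra.commute_algebraMap_left m _)

theorem re_inner_sub_smul_nonneg (hm : ∀ i, m ≤ hX.eigenvalues i)
    (hM : ∀ i, hX.eigenvalues i ≤ M) (v : n → ℂ) :
    0 ≤ re (inner ℂ ((toLp 2 (X *ᵥ v) : EuclideanSpace ℂ n) - (m : ℂ) • toLp 2 v)
      ((M : ℂ) • toLp 2 v - toLp 2 (X *ᵥ v))) := by
  have hH : (X - algebraMap ℝ _ m).IsHermitian :=
    hX.sub (by simp [IsHermitian, Algebra.algebraMap_eq_smul_one])
  have := (hX.posSemidef_sub_mul_sub hm hM).re_dotProduct_nonneg v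
  rw [hH.star_dotProduct_mul_mulVec] at this
  convert this using 3
  -- the `Inner ℂ` instances coming from `CStarModule` and from `InnerProductSpace` agree
  · rfl
  all_goals simp [sub_mulVec, Algebra.algebraMap_eq_smul_one, smul_mulVec]

end Matrix.IsHermitian

section Eigenvalues

variable {d : ℕ} {X : Matrix (Fin d) (Fin d) ℂ}

theorem minEig_le_eigenvalues (hX : X.IsHermitian) (i : Fin d) : minEig X ≤ hX.eigenvalues i := by
  rw [minEig, dif_pos hX]
  exact ciInf_le (Set.finite_range _).bddBelow i

theorem eigenvalues_le_maxEig (hX : X.IsHermitian) (i : Fin d) : hX.eigenvalues i ≤ maxEig X := by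
  rw [maxEig, dif_pos hX]
  exact le_ciSup (Set.finite_range _).bddAbove i

theorem Matrix.PosDef.re_inner_toLp_mulVec_pos (hX : X.PosDef) {v : Fin d → ℂ} (hv : v ≠ 0) :
    0 < re (inner ℂ (toLp 2 v : EuclideanSpace ℂ (Fin d)) (toLp 2 (X *ᵥ v))) := by
  rw [EuclideanSpace.inner_toLp_toLp, dotProduct_comm]
  exact hX.re_dotProduct_pos hv

variable [Nonempty (Fin d)]

theorem Matrix.PosDef.minEig_pos (hX : X.PosDef) : 0 < minEig X := by
  obtain ⟨i, hi⟩ := exists_eq_ciInf_of_finite (f := hX.1.eigenvalues)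
  rw [minEig, dif_pos hX.1, ← hi]
  exact hX.eigenvalues_pos i

theorem Matrix.PosDef.one_le_condNum (hX : X.PosDef) : 1 ≤ condNum X :=
  (one_le_div hX.minEig_pos).2 <| (minEig_le_eigenvalues hX.1 (Classical.arbitrary _)).trans
    (eigenvalues_le_maxEig hX.1 _)

theorem Matrix.PosDef.norm_sq_mul_norm_sq_le_condNum (hX : X.PosDef) (v : Fin d → ℂ) :
    ‖(toLp 2 v : EuclideanSpace ℂ (Fin d))‖ ^ 2 *
        ‖(toLp 2 (X *ᵥ v) : EuclideanSpace ℂ (Fin d))‖ ^ 2 ≤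
      (condNum X + 1) ^ 2 / (4 * condNum X) *
        re (inner ℂ (toLp 2 v : EuclideanSpace ℂ (Fin d)) (toLp 2 (X *ᵥ v))) ^ 2 := by
  have hm := hX.minEig_pos
  have hM : 0 < maxEig X := hm.trans_le <| (one_le_div hm).1 hX.one_le_condNum
  have := kantorovich_of_re_inner_nonneg (m := minEig X) (M := maxEig X) (by positivity) <|
    hX.1.re_inner_sub_smul_nonneg (minEig_le_eigenvalues hX.1) (eigenvalues_le_maxEig hX.1) v
  rw [condNum, show (maxEig X / minEig X + 1) ^ 2 / (4 * (maxEig X / minEig X)) =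
    (minEig X + maxEig X) ^ 2 / (4 * minEig X * maxEig X) by field_simp; ring,
    div_mul_eq_mul_div, le_div_iff₀ (by positivity)]
  linarith

end Eigenvalues

theorem jordan_product_posDef_general {d : ℕ}
    (X Y : Matrix (Fin d) (Fin d) ℂ) (hX : X.PosDef) (hY : Y.PosDef)
    (h : (Real.sqrt (condNum X) - 1) * (Real.sqrt (condNum Y) - 1) < 2) :
    (X * Y + Y * X).PosDef := by
  refine .of_dotProduct_mulVec_pos (hX.1.mul_add_mul hY.1) fun v hv => ?_
  obtain ⟨i, -⟩ := Function.ne_iff.mp hv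
  have : Nonempty (Fin d) := ⟨i⟩
  have hXY := re_inner_pos_of_norm_sq_mul_norm_sq_le
    (hX.re_inner_toLp_mulVec_pos hv) (hY.re_inner_toLp_mulVec_pos hv)
    (hX.norm_sq_mul_norm_sq_le_condNum v) (hY.norm_sq_mul_norm_sq_le_condNum v)
    (kantorovich_sub_one_mul_lt_one hX.one_le_condNum hY.one_le_condNum h)
  rw [hX.1.star_dotProduct_jordan_mulVec hY.1]
  exact ofReal_pos.2 (mul_pos two_pos hXY)

/-- If `(√R(X) − 1)(√R(Y) − 1) < 2` for positive definite `X, Y`, then the Jordan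
product `XY + YX` is positive definite. -/
theorem jordan_product_posDef {d : ℕ} (hd : 0 < d)
    (X Y : Matrix (Fin d) (Fin d) ℂ) (hX : X.PosDef) (hY : Y.PosDef)
    (h : (Real.sqrt (condNum X) - 1) * (Real.sqrt (condNum Y) - 1) < 2) :
    (X * Y + Y * X).PosDef :=
  jordan_product_posDef_general X Y hX hY h
end

section
/- Let G_A, G_B be positive semidefinite matrices on ℂ^D. Then the SDP value τ(G_A, G_B) = min{Tr(H) : H Hermitian, H ≥ G_A, H ≥ G_B} satisfies τ(G_A, G_B) = Tr((G_A − G_B)_+) + Tr(G_B) = (Tr(G_A) + Tr(G_B) + ‖G_A − G_B‖_1)/2, where (·)_+ denotes the positive part and ‖·‖_1 the trace norm. -/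
open Matrix BigOperators
open scoped ComplexOrder

lemma psd_diag_re_nonneg {D : ℕ} {M : Matrix (Fin D) (Fin D) ℂ}
    (hM : M.PosSemidef) (i : Fin D) : 0 ≤ (M i i).re := by
  have := hM.re_dotProduct_nonneg (Pi.single i 1)
  simpa [dotProduct, mulVec, Pi.single_apply, Finset.sum_ite_eq] using this

/-- The SDP value `τ(G_A, G_B) = min{Tr H : H ≥ G_A, H ≥ G_B}` for positive semidefinite
matrices equals `Tr((G_A − G_B)₊) + Tr(G_B) = (Tr G_A + Tr G_B + ‖G_A − G_B‖₁)/2`,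
and the minimum is attained. Here the positive part and trace norm are expressed via the
eigenvalues of the Hermitian matrix `G_A − G_B`. -/
theorem tau_sdp_value {D : ℕ} (GA GB : Matrix (Fin D) (Fin D) ℂ)
    (hGA : GA.PosSemidef) (hGB : GB.PosSemidef) :
    IsLeast {t : ℝ | ∃ H : Matrix (Fin D) (Fin D) ℂ, H.IsHermitian ∧
        (H - GA).PosSemidef ∧ (H - GB).PosSemidef ∧ (H.trace).re = t}
      (∑ i, max ((hGA.isHermitian.sub hGB.isHermitian).eigenvalues i) 0 + (GB.trace).re) ∧
    ∑ i, max ((hGA.isHermitian.sub hGB.isHermitian).eigenvalues i) 0 + (GB.trace).re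
      = ((GA.trace).re + (GB.trace).re
          + ∑ i, |(hGA.isHermitian.sub hGB.isHermitian).eigenvalues i|) / 2 := by
  set hM := hGA.isHermitian.sub hGB.isHermitian with hMdef
  set M := GA - GB with hMM
  set U : Matrix (Fin D) (Fin D) ℂ := (hM.eigenvectorUnitary : Matrix (Fin D) (Fin D) ℂ) with hU
  set ev := hM.eigenvalues with hev
  have hUU : star U * U = 1 := Matrix.mem_unitaryGroup_iff'.mp hM.eigenvectorUnitary.2
  have hUU' : U * star U = 1 := Matrix.mem_unitaryGroup_iff.mp hM.eigenvectorUnitary.2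
  have hspec : M = U * diagonal (Complex.ofReal ∘ ev) * star U := hM.spectral_theorem
  have htrconj : ∀ A : Matrix (Fin D) (Fin D) ℂ, (U * A * star U).trace = A.trace := by
    intro A; rw [trace_mul_cycle, hUU, one_mul]
  have hdiagconj : star U * M * U = diagonal (Complex.ofReal ∘ ev) := by
    rw [hspec]
    simp only [Matrix.mul_assoc]
    rw [hUU, mul_one, ← Matrix.mul_assoc, hUU, one_mul]
  have hsumev : ∑ i, ev i = (GA.trace).re - (GB.trace).re := by
    have h1 : M.trace = ∑ i, (ev i : ℂ) := by
      conv_lhs => rw [hspec]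
      rw [htrconj, trace_diagonal]
      simp
    have h2 : M.trace = GA.trace - GB.trace := trace_sub _ _
    have h3 := h2 ▸ h1
    have := congrArg Complex.re h3.symm
    simpa using this
  constructor
  · constructor
    · refine ⟨GB + U * diagonal (fun i => ((max (ev i) 0 : ℝ) : ℂ)) * star U, ?_, ?_, ?_, ?_⟩
      · have hP : (U * diagonal (fun i => ((max (ev i) 0 : ℝ) : ℂ)) * star U).PosSemidef := by
          refine (Matrix.posSemidef_diagonal_iff.mpr fun i => ?_).mul_mul_conjTranspose_same U
          exact Complex.zero_le_real.mpr (le_max_right _ _)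
        exact hGB.isHermitian.add hP.isHermitian
      · have heq : GB + U * diagonal (fun i => ((max (ev i) 0 : ℝ) : ℂ)) * star U - GA
            = U * diagonal (fun i => ((max (ev i) 0 - ev i : ℝ) : ℂ)) * star U := by
          have h1 : GB + U * diagonal (fun i => ((max (ev i) 0 : ℝ) : ℂ)) * star U - GA
              = U * diagonal (fun i => ((max (ev i) 0 : ℝ) : ℂ)) * star U - M := by
            rw [hMM]; abel
          rw [h1]
          conv_lhs => rw [hspec]
          rw [← sub_mul, ← Matrix.mul_sub, diagonal_sub]
          congr 2
          ext i
          simp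
        rw [heq]
        refine (Matrix.posSemidef_diagonal_iff.mpr fun i => ?_).mul_mul_conjTranspose_same U
        exact Complex.zero_le_real.mpr (by simp [le_max_left])
      · have heq : GB + U * diagonal (fun i => ((max (ev i) 0 : ℝ) : ℂ)) * star U - GB
            = U * diagonal (fun i => ((max (ev i) 0 : ℝ) : ℂ)) * star U := by abel
        rw [heq]
        refine (Matrix.posSemidef_diagonal_iff.mpr fun i => ?_).mul_mul_conjTranspose_same U
        exact Complex.zero_le_real.mpr (le_max_right _ _)
      · rw [trace_add, htrconj, trace_diagonal]
        rw [Complex.add_re, Complex.re_sum]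
        simp [add_comm]
    · rintro t ⟨H, hH, h1, h2, rfl⟩
      set K := star U * (H - GB) * U with hK
      have hKpsd : K.PosSemidef := h2.conjTranspose_mul_mul_same U
      have hK2psd : (star U * (H - GA) * U).PosSemidef := h1.conjTranspose_mul_mul_same U
      have hKsub : K - star U * (H - GA) * U = diagonal (Complex.ofReal ∘ ev) := by
        rw [hK, ← hdiagconj, hMM]
        rw [← sub_mul, ← Matrix.mul_sub]
        congr 2
        abel
      have hKtr : K.trace = (H - GB).trace := by
        rw [hK, trace_mul_cycle, hUU', one_mul]
      have hdiag : ∀ i, max (ev i) 0 ≤ (K i i).re := by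
        intro i
        have h0 : 0 ≤ (K i i).re := psd_diag_re_nonneg hKpsd i
        have h3 : 0 ≤ ((star U * (H - GA) * U) i i).re := psd_diag_re_nonneg hK2psd i
        have h4 : (K i i).re - ((star U * (H - GA) * U) i i).re = ev i := by
          have h5 := congrFun (congrFun hKsub i) i
          have h6 := congrArg Complex.re h5
          simpa [Matrix.sub_apply] using h6
        have : ev i ≤ (K i i).re := by linarith
        exact max_le this h0
      have hbound : ∑ i, max (ev i) 0 ≤ (K.trace).re := by
        rw [trace, Complex.re_sum]
        exact Finset.sum_le_sum fun i _ => hdiag i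
      rw [hKtr, trace_sub] at hbound
      simp only [Complex.sub_re] at hbound
      linarith
  · have hmax : ∀ i, max (ev i) 0 = (ev i + |ev i|) / 2 := fun i => by
      rcases le_or_gt 0 (ev i) with h | h
      · rw [max_eq_left h, abs_of_nonneg h]; ring
      · rw [max_eq_right h.le, abs_of_neg h]; ring
    rw [Finset.sum_congr rfl fun i _ => hmax i, ← Finset.sum_div, Finset.sum_add_distrib, hsumev]
    ring
end

section
/- The noise content criterion and the optimal cloning criterion for compatibility are incomparable: there exist two pairs of qubit POVMs (A', B') and (A'', B'') such that (A', B') satisfies w(A')+w(B') ≥ 1 but fails λ_min(A'_i) ≥ Tr(A'_i)/(2(1+d)) for some i (with d = 2), while (A'', B'') satisfies λ_min(·_i) ≥ Tr(·_i)/(2(1+d)) for all effects but fails w(A'')+w(B'') ≥ 1. -/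
open Matrix BigOperators
open scoped ComplexOrder

/-- `A` is a (two-outcome) POVM on ℂ². -/
def IsPOVM₂ (A : Fin 2 → Matrix (Fin 2) (Fin 2) ℂ) : Prop :=
  (∀ i, (A i).PosSemidef) ∧ ∑ i, A i = 1

lemma herm_diag (a b : ℝ) : (Matrix.diagonal ![(a:ℂ),(b:ℂ)]).IsHermitian := by
  apply Matrix.isHermitian_diagonal_of_self_adjoint
  funext i
  fin_cases i <;> simp [_root_.IsSelfAdjoint, Complex.ext_iff]

lemma iInf_fin2 (f : Fin 2 → ℝ) : (⨅ j, f j) = min (f 0) (f 1) := by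
  apply le_antisymm
  · exact le_min (ciInf_le (Set.finite_range f).bddBelow 0)
      (ciInf_le (Set.finite_range f).bddBelow 1)
  · refine le_ciInf fun j => ?_
    fin_cases j
    · exact min_le_left _ _
    · exact min_le_right _ _

lemma eig_mem (a b : ℝ) (j : Fin 2) :
    (herm_diag a b).eigenvalues j = a ∨ (herm_diag a b).eigenvalues j = b := by
  have h := (herm_diag a b).eigenvalues_mem_spectrum_real j
  rw [spectrum.mem_iff] at h
  set μ := (herm_diag a b).eigenvalues j
  by_contra hc
  push_neg at hc
  apply h
  have : algebraMap ℝ (Matrix (Fin 2) (Fin 2) ℂ) μ - Matrix.diagonal ![(a:ℂ),(b:ℂ)]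
      = Matrix.diagonal ![(μ:ℂ)-a, (μ:ℂ)-b] := by
    ext i k
    fin_cases i <;> fin_cases k <;>
      simp [Matrix.algebraMap_matrix_apply, Matrix.diagonal]
  rw [this, Matrix.isUnit_iff_isUnit_det, Matrix.det_fin_two]
  simp only [Matrix.diagonal]
  simp only [Matrix.of_apply]
  simp only [Matrix.cons_val', Matrix.cons_val_zero, Matrix.cons_val_one, Matrix.head_cons]
  refine isUnit_iff_ne_zero.mpr ?_
  have h1 : (μ:ℂ) - a ≠ 0 := by
    simpa [sub_eq_zero] using fun h => hc.1 (by exact_mod_cast h)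
  have h2 : (μ:ℂ) - b ≠ 0 := by
    simpa [sub_eq_zero] using fun h => hc.2 (by exact_mod_cast h)
  simp [h1, h2]

lemma eig_prod (a b : ℝ) :
    (herm_diag a b).eigenvalues 0 * (herm_diag a b).eigenvalues 1 = a * b := by
  have h := (herm_diag a b).det_eq_prod_eigenvalues
  rw [Fin.prod_univ_two] at h
  have hd : (Matrix.diagonal ![(a:ℂ),(b:ℂ)]).det = (a:ℂ) * b := by
    simp [Matrix.det_fin_two, Matrix.diagonal]
  rw [hd] at h
  have h2 := congrArg Complex.re h
  simpa using h2.symm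

lemma minEig_diag (a b : ℝ) (ha : a ≠ 0) (hb : b ≠ 0) (hab : a ≠ b) :
    minEig (Matrix.diagonal ![(a:ℂ),(b:ℂ)]) = min a b := by
  rw [minEig, dif_pos (herm_diag a b)]
  have hE : ∀ h : (Matrix.diagonal ![(a:ℂ),(b:ℂ)]).IsHermitian, h.eigenvalues = (herm_diag a b).eigenvalues := fun _ => rfl
  rw [iInf_fin2]
  rcases eig_mem a b 0 with h0 | h0 <;> rcases eig_mem a b 1 with h1 | h1 <;>
    have hp := eig_prod a b <;> rw [h0, h1] at hp ⊢
  all_goals first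
    | rfl
    | exact min_comm b a
    | exact absurd (mul_left_cancel₀ ha hp) hab
    | exact absurd (mul_right_cancel₀ hb hp) (Ne.symm hab)

lemma psd_diag (a b : ℝ) (ha : 0 ≤ a) (hb : 0 ≤ b) :
    (Matrix.diagonal ![(a:ℂ),(b:ℂ)]).PosSemidef := by
  refine Matrix.posSemidef_diagonal_iff.mpr fun i => ?_
  fin_cases i <;> simp <;> exact_mod_cast ‹_›

lemma eig_nonneg (a b : ℝ) (ha : 0 ≤ a) (hb : 0 ≤ b) (j : Fin 2) :
    0 ≤ (herm_diag a b).eigenvalues j := by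
  exact (psd_diag a b ha hb).eigenvalues_nonneg j

lemma minEig_half_zero : minEig (Matrix.diagonal ![((1/2:ℝ):ℂ),((0:ℝ):ℂ)]) = 0 := by
  rw [minEig, dif_pos (herm_diag (1/2) 0), iInf_fin2]
  have hp := eig_prod (1/2) 0
  rw [mul_zero] at hp
  have h0 := eig_nonneg (1/2) 0 (by norm_num) le_rfl 0
  have h1 := eig_nonneg (1/2) 0 (by norm_num) le_rfl 1
  rcases mul_eq_zero.mp hp with h | h <;>
    simp only [min_def] <;> split <;> linarith

lemma trace_diag (a b : ℝ) :
    ((Matrix.diagonal ![(a:ℂ),(b:ℂ)]).trace).re = a + b := by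
  rw [Matrix.trace_fin_two]
  simp [Matrix.diagonal]

/-- The noise content criterion and the optimal cloning criterion are incomparable for
qubits (`d = 2`): there is a pair `(A', B')` of qubit POVMs satisfying
`w(A') + w(B') ≥ 1` but violating `λ_min(A'ᵢ) ≥ Tr(A'ᵢ)/(2(1+d))` for some `i`, and a
pair `(A'', B'')` satisfying `λ_min ≥ Tr/(2(1+d))` for all effects but with
`w(A'') + w(B'') < 1`. -/
theorem noise_content_vs_cloning_incomparable :
    ∃ A' B' A'' B'' : Fin 2 → Matrix (Fin 2) (Fin 2) ℂ,
      IsPOVM₂ A' ∧ IsPOVM₂ B' ∧ IsPOVM₂ A'' ∧ IsPOVM₂ B'' ∧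
      (noiseContent A' + noiseContent B' ≥ 1 ∧
        ∃ i, minEig (A' i) < ((A' i).trace).re / (2 * (1 + 2))) ∧
      ((∀ i, minEig (A'' i) ≥ ((A'' i).trace).re / (2 * (1 + 2))) ∧
       (∀ i, minEig (B'' i) ≥ ((B'' i).trace).re / (2 * (1 + 2))) ∧
        noiseContent A'' + noiseContent B'' < 1) := by
  set P : Fin 2 → Matrix (Fin 2) (Fin 2) ℂ :=
    ![Matrix.diagonal ![((1/2:ℝ):ℂ),((0:ℝ):ℂ)], Matrix.diagonal ![((1/2:ℝ):ℂ),((1:ℝ):ℂ)]] with hP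
  set Q : Fin 2 → Matrix (Fin 2) (Fin 2) ℂ :=
    ![Matrix.diagonal ![((5/6:ℝ):ℂ),((1/6:ℝ):ℂ)], Matrix.diagonal ![((1/6:ℝ):ℂ),((5/6:ℝ):ℂ)]] with hQ
  have hPpovm : IsPOVM₂ P := by
    constructor
    · intro i
      fin_cases i
      · exact psd_diag (1/2) 0 (by norm_num) le_rfl
      · exact psd_diag (1/2) 1 (by norm_num) (by norm_num)
    · rw [Fin.sum_univ_two]
      ext i j
      fin_cases i <;> fin_cases j <;> simp [hP, Matrix.diagonal, Matrix.one_apply] <;> norm_num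
  have hQpovm : IsPOVM₂ Q := by
    constructor
    · intro i
      fin_cases i
      · exact psd_diag (5/6) (1/6) (by norm_num) (by norm_num)
      · exact psd_diag (1/6) (5/6) (by norm_num) (by norm_num)
    · rw [Fin.sum_univ_two]
      ext i j
      fin_cases i <;> fin_cases j <;> simp [hQ, Matrix.diagonal, Matrix.one_apply] <;> norm_num
  have hP0 : minEig (P 0) = 0 := minEig_half_zero
  have hP1 : minEig (P 1) = 1/2 := by
    show minEig (Matrix.diagonal ![((1/2:ℝ):ℂ),((1:ℝ):ℂ)]) = 1/2
    rw [minEig_diag (1/2) 1 (by norm_num) one_ne_zero (by norm_num)]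
    norm_num
  have hQ0 : minEig (Q 0) = 1/6 := by
    show minEig (Matrix.diagonal ![((5/6:ℝ):ℂ),((1/6:ℝ):ℂ)]) = 1/6
    rw [minEig_diag (5/6) (1/6) (by norm_num) (by norm_num) (by norm_num)]
    norm_num
  have hQ1 : minEig (Q 1) = 1/6 := by
    show minEig (Matrix.diagonal ![((1/6:ℝ):ℂ),((5/6:ℝ):ℂ)]) = 1/6
    rw [minEig_diag (1/6) (5/6) (by norm_num) (by norm_num) (by norm_num)]
    norm_num
  have hNP : noiseContent P = 1/2 := by
    rw [noiseContent, Fin.sum_univ_two, hP0, hP1]; norm_num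
  have hNQ : noiseContent Q = 1/3 := by
    rw [noiseContent, Fin.sum_univ_two, hQ0, hQ1]; norm_num
  refine ⟨P, P, Q, Q, hPpovm, hPpovm, hQpovm, hQpovm, ⟨?_, ⟨0, ?_⟩⟩, ?_, ?_, ?_⟩
  · rw [hNP]; norm_num
  · rw [hP0]
    show (0:ℝ) < ((Matrix.diagonal ![((1/2:ℝ):ℂ),((0:ℝ):ℂ)]).trace).re / (2 * (1 + 2))
    rw [trace_diag]; norm_num
  · intro i
    fin_cases i
    · show minEig (Q 0) ≥ _
      rw [hQ0]
      show _ ≥ ((Matrix.diagonal ![((5/6:ℝ):ℂ),((1/6:ℝ):ℂ)]).trace).re / (2 * (1 + 2))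
      rw [trace_diag]; norm_num
    · show minEig (Q 1) ≥ _
      rw [hQ1]
      show _ ≥ ((Matrix.diagonal ![((1/6:ℝ):ℂ),((5/6:ℝ):ℂ)]).trace).re / (2 * (1 + 2))
      rw [trace_diag]; norm_num
  · intro i
    fin_cases i
    · show minEig (Q 0) ≥ _
      rw [hQ0]
      show _ ≥ ((Matrix.diagonal ![((5/6:ℝ):ℂ),((1/6:ℝ):ℂ)]).trace).re / (2 * (1 + 2))
      rw [trace_diag]; norm_num
    · show minEig (Q 1) ≥ _
      rw [hQ1]
      show _ ≥ ((Matrix.diagonal ![((1/6:ℝ):ℂ),((5/6:ℝ):ℂ)]).trace).re / (2 * (1 + 2))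
      rw [trace_diag]; norm_num
  · rw [hNQ]; norm_num
end

section
/- Consider the 3-outcome qubit POVM with effects A_i = (2/3)|a_i⟩⟨a_i|, where a_1 = (1,0), a_2 = (−1/2, √3/2), a_3 = (−1/2, −√3/2). Its probability range equals the disk of radius 1/√6 centered at (1/3,1/3,1/3) inside the probability simplex Δ_3: {(Tr(ρA_1), Tr(ρA_2), Tr(ρA_3)) : ρ density matrix on ℂ²} = {p ∈ Δ_3 : ‖p − (1/3,1/3,1/3)‖² ≤ 1/6}. -/
open Matrix BigOperators
open scoped ComplexOrder

/-- The three unit vectors of the trine qubit POVM. -/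
noncomputable def trineVec : Fin 3 → Fin 2 → ℂ :=
  ![![1, 0],
    ![-(1/2 : ℂ), ((Real.sqrt 3 : ℝ) : ℂ) / 2],
    ![-(1/2 : ℂ), -(((Real.sqrt 3 : ℝ) : ℂ) / 2)]]

/-- The trine POVM effects `Aᵢ = (2/3)|aᵢ⟩⟨aᵢ|`. -/
noncomputable def trinePOVM (i : Fin 3) : Matrix (Fin 2) (Fin 2) ℂ :=
  (2/3 : ℂ) • Matrix.vecMulVec (trineVec i) (star (trineVec i))

/-!
Write a qubit state in Bloch form `ρ = (1 + x σₓ + y σ_y + z σ_z) / 2`. A Hermitian `2 × 2`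
matrix is positive semidefinite iff its trace and determinant are nonnegative, so `ρ ≥ 0` iff
`x² + y² + z² ≤ 1`. The trine probabilities do not see `y`: they are `pᵢ = (1 + ⟪nᵢ, (x, z)⟫) / 3`
for three unit vectors `nᵢ` at mutual angles `2π/3`, whence `∑ (pᵢ - 1/3)² = (x² + z²) / 6`.
So the probability range is the affine image of the unit disk in the plane `∑ pᵢ = 1`; this is
the disk inscribed in the simplex, so nonnegativity of the `pᵢ` comes for free.
-/

open Finset Complex

theorem nonneg_of_sum_eq_one_of_sum_sq_sub_le {ι : Type*} [Fintype ι]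
    {p : ι → ℝ} (hsum : ∑ i, p i = 1)
    (hp : ∑ i, (p i - (Fintype.card ι : ℝ)⁻¹) ^ 2
      ≤ ((Fintype.card ι : ℝ) * (Fintype.card ι - 1))⁻¹)
    (j : ι) : 0 ≤ p j := by
  classical
  set n : ℝ := (Fintype.card ι : ℝ)
  set q : ι → ℝ := fun i => p i - n⁻¹
  have hcard : 1 ≤ Fintype.card ι := Fintype.card_pos_iff.mpr ⟨j⟩
  have hn : 1 ≤ n := Nat.one_le_cast.mpr hcard
  have hq : ∑ i ∈ univ.erase j, q i = -q j := by
    have : ∑ i, q i = 0 := by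
      simp only [q, sum_sub_distrib, hsum, sum_const, card_univ, nsmul_eq_mul]
      field_simp
      ring
    rw [← add_sum_erase _ _ (mem_univ j)] at this
    linarith
  -- Cauchy–Schwarz for the other `n - 1` coordinates, whose sum is `-q j`.
  have hcs : q j ^ 2 ≤ (n - 1) * ∑ i ∈ univ.erase j, q i ^ 2 := by
    have := sq_sum_le_card_mul_sum_sq (s := univ.erase j) (f := q)
    rwa [hq, neg_sq, card_erase_of_mem (mem_univ j), card_univ, Nat.cast_sub hcard,
      Nat.cast_one] at this
  have hS : ∑ i, q i ^ 2 = q j ^ 2 + ∑ i ∈ univ.erase j, q i ^ 2 :=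
    (add_sum_erase _ _ (mem_univ j)).symm
  -- For `n = 1` the radius is the junk value `0⁻¹ = 0`.
  have hrad : (n - 1) * (n * (n - 1))⁻¹ ≤ n⁻¹ := by
    rcases hn.eq_or_lt with h | h
    · rw [← h]; norm_num
    · rw [mul_inv, mul_left_comm, mul_inv_cancel₀ (by linarith), mul_one]
  have hqj : n * q j ^ 2 ≤ n⁻¹ :=
    calc n * q j ^ 2 ≤ (n - 1) * ∑ i, q i ^ 2 := by rw [hS]; linarith
      _ ≤ (n - 1) * (n * (n - 1))⁻¹ := mul_le_mul_of_nonneg_left hp (by linarith)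
      _ ≤ n⁻¹ := hrad
  have hqj' : q j ^ 2 ≤ n⁻¹ ^ 2 := by
    rw [sq n⁻¹, ← div_eq_mul_inv, le_div_iff₀ (by positivity), mul_comm]
    exact hqj
  have := (abs_le_of_sq_le_sq' hqj' (by positivity)).1
  simp only [q] at this
  linarith

theorem Matrix.IsHermitian.posSemidef_iff_fin_two {𝕜 : Type*} [RCLike 𝕜]
    {A : Matrix (Fin 2) (Fin 2) 𝕜} (hA : A.IsHermitian) :
    A.PosSemidef ↔ 0 ≤ A.trace ∧ 0 ≤ A.det := by
  refine ⟨fun h => ⟨h.trace_nonneg, h.det_nonneg⟩, fun ⟨htr, hdet⟩ => ?_⟩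
  rw [hA.trace_eq_sum_eigenvalues, Fin.sum_univ_two, ← RCLike.ofReal_add,
    RCLike.ofReal_nonneg] at htr
  rw [hA.det_eq_prod_eigenvalues, Fin.prod_univ_two, ← RCLike.ofReal_mul,
    RCLike.ofReal_nonneg] at hdet
  have h0 : 0 ≤ hA.eigenvalues 0 := by nlinarith
  have h1 : 0 ≤ hA.eigenvalues 1 := by nlinarith
  rw [hA.posSemidef_iff_eigenvalues_nonneg]
  intro i
  fin_cases i
  exacts [h0, h1]

/-- The qubit state `(1 + x σₓ + y σ_y + z σ_z) / 2` with Bloch vector `(x, y, z)`. -/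
noncomputable def blochMatrix (x y z : ℝ) : Matrix (Fin 2) (Fin 2) ℂ :=
  !![(1 + z) / 2, (x - y * I) / 2; (x + y * I) / 2, (1 - z) / 2]

lemma isHermitian_blochMatrix (x y z : ℝ) : (blochMatrix x y z).IsHermitian := by
  ext i j
  fin_cases i <;> fin_cases j <;> simp [blochMatrix, conj_ofReal, sub_eq_add_neg]

@[simp] lemma trace_blochMatrix (x y z : ℝ) : (blochMatrix x y z).trace = 1 := by
  simp [blochMatrix, trace_fin_two, ← add_div, add_add_sub_cancel]

lemma det_blochMatrix (x y z : ℝ) :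
    (blochMatrix x y z).det = ((1 - (x ^ 2 + y ^ 2 + z ^ 2)) / 4 : ℝ) := by
  simp only [blochMatrix, det_fin_two_of]
  push_cast
  linear_combination (y ^ 2 / 4 : ℂ) * I_sq

lemma posSemidef_blochMatrix_iff (x y z : ℝ) :
    (blochMatrix x y z).PosSemidef ↔ x ^ 2 + y ^ 2 + z ^ 2 ≤ 1 := by
  rw [(isHermitian_blochMatrix x y z).posSemidef_iff_fin_two, trace_blochMatrix,
    det_blochMatrix, zero_le_real]
  constructor
  · rintro ⟨-, h⟩
    linarith
  · intro h
    exact ⟨zero_le_one, by linarith⟩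

lemma Matrix.IsHermitian.exists_eq_blochMatrix {ρ : Matrix (Fin 2) (Fin 2) ℂ}
    (hρ : ρ.IsHermitian) (htr : ρ.trace = 1) : ∃ x y z, ρ = blochMatrix x y z := by
  refine ⟨2 * (ρ 1 0).re, 2 * (ρ 1 0).im, 2 * (ρ 0 0).re - 1, ?_⟩
  have h00 : ((ρ 0 0).re : ℂ) = ρ 0 0 := hρ.coe_re_apply_self 0
  have h11 : ρ 1 1 = 1 - ρ 0 0 := by
    rw [trace_fin_two] at htr
    linear_combination htr
  have h10 : ((ρ 1 0).re : ℂ) + (ρ 1 0).im * I = ρ 1 0 := re_add_im _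
  have h01 : ρ 0 1 = (ρ 1 0).re - (ρ 1 0).im * I := by
    rw [← hρ.apply 0 1]
    exact RCLike.conj_eq_re_sub_im _
  conv_lhs => rw [eta_fin_two ρ]
  rw [blochMatrix]
  push_cast
  congr
  · linear_combination -h00
  · linear_combination h01
  · linear_combination -h10
  · linear_combination h11 + h00

noncomputable def trineProb (x z : ℝ) : Fin 3 → ℝ :=
  ![(1 + z) / 3, (2 - z - √3 * x) / 6, (2 - z + √3 * x) / 6]

lemma star_trineVec (i : Fin 3) : star (trineVec i) = trineVec i := by
  ext j
  fin_cases i <;> fin_cases j <;> simp [trineVec, conj_ofReal]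

lemma trace_blochMatrix_mul_trinePOVM (x y z : ℝ) (i : Fin 3) :
    (blochMatrix x y z * trinePOVM i).trace = trineProb x z i := by
  have h3 : ((√3 : ℝ) : ℂ) * ((√3 : ℝ) : ℂ) = 3 := by
    rw [← ofReal_mul, Real.mul_self_sqrt (by norm_num)]
    norm_num
  rw [trinePOVM, star_trineVec, mul_smul_comm, trace_smul, mul_vecMulVec, trace_vecMulVec,
    vec2_dotProduct, mulVec_fin_two, blochMatrix]
  fin_cases i <;>
    simp only [trineVec, trineProb, of_apply, cons_val', cons_val_zero, cons_val_one,
      cons_val_fin_one, smul_eq_mul]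
  · push_cast
    ring
  all_goals
    push_cast
    linear_combination (1 - (z : ℂ)) / 12 * h3

lemma sum_trineProb (x z : ℝ) : ∑ i, trineProb x z i = 1 := by
  rw [Fin.sum_univ_three]
  simp only [trineProb, cons_val_zero, cons_val_one, cons_val_two, head_cons, tail_cons]
  ring

lemma sum_sq_trineProb_sub (x z : ℝ) :
    ∑ i, (trineProb x z i - 1 / 3) ^ 2 = (x ^ 2 + z ^ 2) / 6 := by
  have h3 : √3 ^ 2 = 3 := Real.sq_sqrt (by norm_num)
  rw [Fin.sum_univ_three]
  simp only [trineProb, cons_val_zero, cons_val_one, cons_val_two, head_cons, tail_cons]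
  linear_combination x ^ 2 / 18 * h3

lemma trineProb_of_sum_eq_one {p : Fin 3 → ℝ} (hp : ∑ i, p i = 1) :
    trineProb (√3 * (p 2 - p 1)) (3 * p 0 - 1) = p := by
  have h3 : √3 ^ 2 = 3 := Real.sq_sqrt (by norm_num)
  rw [Fin.sum_univ_three] at hp
  ext i
  fin_cases i <;>
    simp only [trineProb, Fin.zero_eta, Fin.mk_one, Fin.reduceFinMk, cons_val_zero, cons_val_one,
      cons_val_two, head_cons, tail_cons]
  · ring
  · linear_combination -(p 2 - p 1) / 6 * h3 - hp / 2
  · linear_combination (p 2 - p 1) / 6 * h3 - hp / 2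

lemma mem_stdSimplex_and_sum_sq_le_iff {p : Fin 3 → ℝ} :
    (p ∈ stdSimplex ℝ (Fin 3) ∧ ∑ i, (p i - 1 / 3) ^ 2 ≤ 1 / 6) ↔
      ∃ x z, x ^ 2 + z ^ 2 ≤ 1 ∧ trineProb x z = p := by
  constructor
  · rintro ⟨⟨-, hsum⟩, hdisk⟩
    have hp := trineProb_of_sum_eq_one hsum
    refine ⟨_, _, ?_, hp⟩
    rw [← hp, sum_sq_trineProb_sub] at hdisk
    linarith
  · rintro ⟨x, z, hxz, rfl⟩
    have hdisk : ∑ i, (trineProb x z i - 1 / 3) ^ 2 ≤ 1 / 6 := by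
      rw [sum_sq_trineProb_sub]
      linarith
    refine ⟨⟨fun i => nonneg_of_sum_eq_one_of_sum_sq_sub_le (sum_trineProb x z) ?_ i,
      sum_trineProb x z⟩, hdisk⟩
    convert hdisk using 2 <;> norm_num

/-- The probability range of the trine qubit POVM is the disk of radius `1/√6` centered
at `(1/3,1/3,1/3)` inside the probability simplex `Δ₃`. -/
theorem trine_povm_probRange :
    {p : Fin 3 → ℝ | ∃ ρ : Matrix (Fin 2) (Fin 2) ℂ, ρ.PosSemidef ∧ ρ.trace = 1 ∧
        ∀ i, (ρ * trinePOVM i).trace = (p i : ℂ)}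
      = {p : Fin 3 → ℝ | p ∈ stdSimplex ℝ (Fin 3) ∧
          ∑ i, (p i - 1/3) ^ 2 ≤ 1/6} := by
  ext p
  rw [Set.mem_ofPred_eq, Set.mem_ofPred_eq, mem_stdSimplex_and_sum_sq_le_iff]
  constructor
  · rintro ⟨ρ, hρ, htr, hp⟩
    obtain ⟨x, y, z, rfl⟩ := hρ.isHermitian.exists_eq_blochMatrix htr
    refine ⟨x, z, ?_, funext fun i => ?_⟩
    · nlinarith [(posSemidef_blochMatrix_iff x y z).1 hρ, sq_nonneg y]
    · exact_mod_cast (trace_blochMatrix_mul_trinePOVM x y z i).symm.trans (hp i)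
  · rintro ⟨x, z, hxz, rfl⟩
    exact ⟨blochMatrix x 0 z, (posSemidef_blochMatrix_iff x 0 z).2 (by simpa using hxz),
      trace_blochMatrix x 0 z, trace_blochMatrix_mul_trinePOVM x 0 z⟩
end
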